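/- arXiv:2404.04504 — 4 statements merged into one kernel-verified Lean document; each statement's English description precedes it below -/
import Mathlib

section
/- (Jeandel–Rolin) For every positive integer k: if the tiling problem for k Wang bars is undecidable (i.e., the predicate on codes of sets of exactly k Wang bars given by 'the encoded set tiles the plane' is not computable), then the tiling problem for Wang tiles with color deficiency k−1 is undecidable (i.e., the predicate on codes of finite sets T of Wang tiles with cd(T) = k−1 given by 'the encoded set tiles the plane' is not computable). -/
/-- A Wang tile: a quadruple (north, east, south, west) of colors (natural numbers). -/
abbrev WangTile : Type := ℕ × ℕ × ℕ × ℕ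

def WangTile.north (t : WangTile) : ℕ := t.1
def WangTile.east  (t : WangTile) : ℕ := t.2.1
def WangTile.south (t : WangTile) : ℕ := t.2.2.1
def WangTile.west  (t : WangTile) : ℕ := t.2.2.2

/-- `f : ℤ × ℤ → WangTile` is a tiling of the plane by (translated copies of) tiles
of `T`: adjacent edges carry the same color. -/
def IsWangTiling (T : Finset WangTile) (f : ℤ × ℤ → WangTile) : Prop :=
  (∀ p, f p ∈ T) ∧
  (∀ x y : ℤ, (f (x, y)).east = (f (x + 1, y)).west) ∧
  (∀ x y : ℤ, (f (x, y)).north = (f (x, y + 1)).south)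

/-- The finite set `T` of Wang tiles tiles the plane. -/
def TilesPlane (T : Finset WangTile) : Prop := ∃ f, IsWangTiling T f

/-- A Wang bar: a list of top colors, a list of bottom colors (of the same positive
length `l`), a left color and a right color. -/
abbrev WangBar : Type := List ℕ × List ℕ × ℕ × ℕ

def WangBar.top    (b : WangBar) : List ℕ := b.1
def WangBar.bottom (b : WangBar) : List ℕ := b.2.1
def WangBar.left   (b : WangBar) : ℕ := b.2.2.1
def WangBar.right  (b : WangBar) : ℕ := b.2.2.2

/-- The length of a Wang bar. -/
def WangBar.len (b : WangBar) : ℕ := b.1.length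

/-- A genuine Wang bar has positive length and as many bottom colors as top colors. -/
def WangBar.IsValid (b : WangBar) : Prop := 0 < b.len ∧ b.top.length = b.bottom.length

/-- A tiling of the plane by translated copies of bars of `B`, recorded by the function
`f` sending each unit cell to the bar covering it together with the index of the cell
inside that bar.  The conditions say that the cells of one placed bar are consecutive
cells of one row, that colors of horizontally adjacent bars match at their common
vertical unit segment, and that colors of vertically adjacent bars match at every
common horizontal unit segment. -/
def IsBarTiling (B : Finset WangBar) (f : ℤ × ℤ → WangBar × ℕ) : Prop :=
  (∀ p, (f p).1 ∈ B) ∧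
  (∀ p, (f p).2 < (f p).1.len) ∧
  (∀ x y : ℤ, (f (x, y)).2 + 1 < (f (x, y)).1.len →
      f (x + 1, y) = ((f (x, y)).1, (f (x, y)).2 + 1)) ∧
  (∀ x y : ℤ, 0 < (f (x, y)).2 →
      f (x - 1, y) = ((f (x, y)).1, (f (x, y)).2 - 1)) ∧
  (∀ x y : ℤ, (f (x, y)).2 + 1 = (f (x, y)).1.len →
      (f (x + 1, y)).2 = 0 ∧ (f (x, y)).1.right = (f (x + 1, y)).1.left) ∧
  (∀ x y : ℤ, (f (x, y)).1.top.getD (f (x, y)).2 0 =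
      (f (x, y + 1)).1.bottom.getD (f (x, y + 1)).2 0)

/-- The finite set `B` of Wang bars tiles the plane. -/
def BarsTilePlane (B : Finset WangBar) : Prop := ∃ f, IsBarTiling B f

/-- The set of the (at most four) edge colors of a Wang tile. -/
def WangTile.colors (t : WangTile) : Finset ℕ := {t.north, t.east, t.south, t.west}

/-- `c(T)`: the set of distinct colors occurring on the edges of tiles of `T`. -/
def tileSetColors (T : Finset WangTile) : Finset ℕ := T.biUnion WangTile.colors

/-- The color deficiency `cd(T) = n(T) - c(T)`. -/
def colorDeficiency (T : Finset WangTile) : ℕ := T.card - (tileSetColors T).card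

/-!
Cut each bar `b` of length `l` into `l` Wang tiles: a color `c` of the bar becomes `3 * c`, and the
vertical edge between cells `i - 1` and `i` of `b` gets the color `3 * ⟨b, i⟩ + 1`, which no other
edge carries. These inner colors force the cell tiles of a bar to be laid side by side in order, so
the cell tiles tile the plane exactly when the bars do. There are `k` first cells and one inner
color per other cell, so the cell tiles outnumber their colors by `k - m`, where `m` is the number
of outer colors `3 * c`. Adding one tile `(3c, 2, 3c, 3c)` per outer color adds `m` tiles and the
single color `2`, making the deficiency `k - 1`; since no tile has west color `2`, the new tiles
never occur in a tiling. The whole construction is primitive recursive on codes, so deciding the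
tile problem would decide the bar problem.
-/

open Encodable Finset

namespace Primrec

variable {α : Type*} [Primcodable α]

theorem list_mem [DecidableEq α] : PrimrecRel fun (a : α) (l : List α) => a ∈ l :=
  (Primrec.eq.exists_mem_list.swap).of_eq fun a l => by simp

theorem list_dedup [DecidableEq α] : Primrec (List.dedup : List α → List α) := by
  have step : Primrec₂ fun (_ : List α) (p : α × List α) =>
      if p.1 ∈ p.2 then p.2 else p.1 :: p.2 :=
    Primrec.ite (list_mem.comp (fst.comp snd) (snd.comp snd)) (snd.comp snd)
      (list_cons.comp (fst.comp snd) (snd.comp snd))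
  refine (list_foldr Primrec.id (const []) step).of_eq fun l => ?_
  induction l with
  | nil => rfl
  | cons a l ih =>
    simp only [id, List.foldr_cons] at ih ⊢
    rw [ih]
    split_ifs with ha
    · exact (List.dedup_cons_of_mem' ha).symm
    · exact (List.dedup_cons_of_notMem' ha).symm

theorem list_orderedInsert {r : α → α → Prop} [DecidableRel r] (hr : PrimrecRel r) :
    Primrec₂ (List.orderedInsert r) := by
  have step : Primrec₂ fun (p : α × List α) (q : α × List α × List α) =>
      if r p.1 q.1 then p.1 :: q.1 :: q.2.1 else q.1 :: q.2.2 :=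
    Primrec.ite (hr.comp (fst.comp fst) (fst.comp snd))
      (list_cons.comp (fst.comp fst) (list_cons.comp (fst.comp snd) (fst.comp (snd.comp snd))))
      (list_cons.comp (fst.comp snd) (snd.comp (snd.comp snd)))
  refine (list_rec snd (list_cons.comp fst (const [])) step).of_eq fun p => ?_
  obtain ⟨a, l⟩ := p
  induction l with
  | nil => rfl
  | cons b l ih => simp [← ih]

theorem list_insertionSort {r : α → α → Prop} [DecidableRel r] (hr : PrimrecRel r) :
    Primrec (List.insertionSort r) :=
  list_foldr Primrec.id (const []) ((list_orderedInsert hr).comp (fst.comp snd) (snd.comp snd)).to₂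

end Primrec

namespace Encodable

variable {α : Type*} [Encodable α] [DecidableEq α]

-- `encode s` is by definition the code of the merge sort of `s.val` by increasing code.
theorem encode_toFinset (l : List α) :
    encode l.toFinset = encode (l.dedup.insertionSort fun a b => encode a ≤ encode b) := by
  let _ : LinearOrder α := LinearOrder.lift' encode encode_injective
  exact congrArg encode (List.mergeSort_eq_insertionSort (· ≤ ·) l.dedup)

theorem exists_decode_encode_finset (s : Finset α) :
    ∃ l : List α, decode (encode s) = some l ∧ l.toFinset = s := by
  let _ : LinearOrder α := LinearOrder.lift' encode encode_injective
  exact ⟨s.sort, encodek _, s.sort_toFinset _⟩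

end Encodable

open Primrec in
theorem exists_primrec_encode_finset_map {α β : Type*} [Primcodable α] [Primcodable β]
    [DecidableEq α] [DecidableEq β] {F : List α → List β} {Φ : Finset α → Finset β}
    (hF : Primrec F) (hΦ : ∀ l, (F l).toFinset = Φ l.toFinset) :
    ∃ c : ℕ → ℕ, Primrec c ∧ ∀ s, c (encode s) = encode (Φ s) := by
  refine ⟨fun n => encode ((F ((decode n).getD [])).dedup.insertionSort
    fun a b => encode a ≤ encode b), ?_, fun s => ?_⟩
  · have hle : PrimrecRel fun a b : β => encode a ≤ encode b :=
      nat_le.comp (Primrec.encode.comp fst) (Primrec.encode.comp snd)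
    exact Primrec.encode.comp <| (list_insertionSort hle).comp <|
      list_dedup.comp <| hF.comp <| option_getD.comp Primrec.decode (const [])
  · obtain ⟨l, hl, rfl⟩ := exists_decode_encode_finset s
    dsimp only
    rw [hl, Option.getD_some, ← encode_toFinset, hΦ]

theorem TilesPlane.mono {T T' : Finset WangTile} (hTT' : T ⊆ T') (h : TilesPlane T) :
    TilesPlane T' :=
  let ⟨f, hmem, hhor, hver⟩ := h
  ⟨f, fun p => hTT' (hmem p), hhor, hver⟩

theorem IsWangTiling.of_union_of_east_ne_west {T S : Finset WangTile} {f : ℤ × ℤ → WangTile}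
    (hf : IsWangTiling (T ∪ S) f) (hS : ∀ s ∈ S, ∀ t ∈ T ∪ S, s.east ≠ t.west) :
    IsWangTiling T f := by
  obtain ⟨hmem, hhor, hver⟩ := hf
  refine ⟨fun ⟨x, y⟩ => ?_, hhor, hver⟩
  rcases mem_union.1 (hmem (x, y)) with h | h
  · exact h
  · exact absurd (hhor x y) (hS _ h _ (hmem (x + 1, y)))

namespace WangTile

variable (t : WangTile)

theorem north_mem_colors : t.north ∈ t.colors := by simp [colors]
theorem east_mem_colors : t.east ∈ t.colors := by simp [colors]
theorem west_mem_colors : t.west ∈ t.colors := by simp [colors]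

end WangTile

namespace WangBar

def innerColor (b : WangBar) (i : ℕ) : ℕ := 3 * Nat.pair (encode b) i + 1

theorem innerColor_inj {b b' : WangBar} {i i' : ℕ} :
    b.innerColor i = b'.innerColor i' ↔ b = b' ∧ i = i' := by
  simp [innerColor, Nat.pair_eq_pair, encode_inj]

theorem innerColor_mod_three (b : WangBar) (i : ℕ) : b.innerColor i % 3 = 1 := by
  simp [innerColor, Nat.add_mod]

def cellTile (b : WangBar) (i : ℕ) : WangTile :=
  (3 * b.top.getD i 0,
    if i + 1 = b.len then 3 * b.right else b.innerColor (i + 1),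
    3 * b.bottom.getD i 0,
    if i = 0 then 3 * b.left else b.innerColor i)

theorem cellTile_east_eq_west_iff {b b' : WangBar} {i i' : ℕ} (hi : i < b.len) :
    (b.cellTile i).east = (b'.cellTile i').west ↔
      (i + 1 < b.len ∧ b' = b ∧ i' = i + 1) ∨ (i + 1 = b.len ∧ i' = 0 ∧ b.right = b'.left) := by
  have h := b.innerColor_mod_three (i + 1)
  have h' := b'.innerColor_mod_three i'
  simp only [cellTile, WangTile.east, WangTile.west]
  split_ifs with hlast
  · omega
  · omega
  · omega
  · rw [innerColor_inj]
    constructor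
    · rintro ⟨rfl, rfl⟩
      exact .inl ⟨by omega, rfl, rfl⟩
    · rintro (⟨-, rfl, rfl⟩ | ⟨hlast', -⟩)
      · exact ⟨rfl, rfl⟩
      · exact absurd hlast' hlast

theorem cellTile_east_eq_west_succ {b : WangBar} {i : ℕ} (h : i + 1 ≠ b.len) :
    (b.cellTile i).east = (b.cellTile (i + 1)).west := by
  simp [cellTile, WangTile.east, WangTile.west, h]

theorem cellTile_north_eq_south_iff {b b' : WangBar} {i i' : ℕ} :
    (b.cellTile i).north = (b'.cellTile i').south ↔ b.top.getD i 0 = b'.bottom.getD i' 0 := by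
  simp only [cellTile, WangTile.north, WangTile.south]
  omega

theorem cellTile_west_mod_three_eq_zero_iff {b : WangBar} {i : ℕ} :
    (b.cellTile i).west % 3 = 0 ↔ i = 0 := by
  have := b.innerColor_mod_three i
  simp only [cellTile, WangTile.west]
  split_ifs <;> omega

theorem mod_three_ne_two_of_mem_colors_cellTile {b : WangBar} {i c : ℕ}
    (hc : c ∈ (b.cellTile i).colors) : c % 3 ≠ 2 := by
  have := b.innerColor_mod_three i
  have := b.innerColor_mod_three (i + 1)
  simp only [WangTile.colors, cellTile, WangTile.north, WangTile.east, WangTile.south,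
    WangTile.west, mem_insert, mem_singleton] at hc
  split_ifs at hc <;> omega

theorem cellTile_zero_injOn : Set.InjOn (cellTile · 0) {b | b.IsValid} := by
  rintro ⟨t, d, l, r⟩ ⟨hlen, hval⟩ ⟨t', d', l', r'⟩ ⟨hlen', hval'⟩ h
  have h1 := innerColor_mod_three (t, d, l, r) 1
  have h1' := innerColor_mod_three (t', d', l', r') 1
  simp only [cellTile, Prod.mk.injEq, zero_add, ↓reduceIte] at h
  obtain ⟨hN, hE, hS, hW⟩ := h
  split_ifs at hE with hb hb'
  · simp only [len, top, bottom, left, right] at *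
    obtain ⟨x, rfl⟩ := List.length_eq_one_iff.mp hb.symm
    obtain ⟨x', rfl⟩ := List.length_eq_one_iff.mp hb'.symm
    obtain ⟨y, rfl⟩ := List.length_eq_one_iff.mp hval.symm
    obtain ⟨y', rfl⟩ := List.length_eq_one_iff.mp hval'.symm
    simp only [List.getD_cons_zero] at hN hS
    simp only [Prod.mk.injEq, List.cons.injEq, and_true]
    omega
  · omega
  · omega
  · exact (innerColor_inj.mp hE).1

end WangBar

section BarTiles

open WangBar

def barTiles (B : Finset WangBar) : Finset WangTile :=
  B.biUnion fun b => (range b.len).image b.cellTile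

variable {B : Finset WangBar}

theorem mem_barTiles {t : WangTile} : t ∈ barTiles B ↔ ∃ b ∈ B, ∃ i < b.len, b.cellTile i = t := by
  simp [barTiles]

theorem tilesPlane_barTiles_of_barsTilePlane (h : BarsTilePlane B) : TilesPlane (barTiles B) := by
  obtain ⟨g, hmem, hlt, hnext, -, hend, hvert⟩ := h
  refine ⟨fun p => (g p).1.cellTile (g p).2, fun p => mem_barTiles.2 ⟨_, hmem p, _, hlt p, rfl⟩,
    fun x y => (cellTile_east_eq_west_iff (hlt _)).2 ?_,
    fun x y => cellTile_north_eq_south_iff.2 (hvert x y)⟩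
  rcases Nat.lt_or_eq_of_le (hlt (x, y)) with hin | hlast
  · rw [hnext x y hin]
    exact .inl ⟨hin, rfl, rfl⟩
  · exact .inr ⟨hlast, hend x y hlast⟩

theorem barsTilePlane_of_tilesPlane_barTiles (h : TilesPlane (barTiles B)) : BarsTilePlane B := by
  obtain ⟨f, hmem, hhor, hver⟩ := h
  choose F hF G hG hFG using fun p => mem_barTiles.1 (hmem p)
  have hhor' (x y : ℤ) :
      (G (x, y) + 1 < (F (x, y)).len ∧ F (x + 1, y) = F (x, y) ∧ G (x + 1, y) = G (x, y) + 1) ∨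
      (G (x, y) + 1 = (F (x, y)).len ∧ G (x + 1, y) = 0 ∧
        (F (x, y)).right = (F (x + 1, y)).left) :=
    (cellTile_east_eq_west_iff (hG (x, y))).1 (by rw [hFG, hFG]; exact hhor x y)
  refine ⟨fun p => (F p, G p), hF, hG, fun x y hin => ?_, fun x y hpos => ?_,
    fun x y hlast => ?_, fun x y => cellTile_north_eq_south_iff.1 ?_⟩ <;> dsimp only at *
  · obtain ⟨-, hb, hi⟩ | ⟨hlast, -⟩ := hhor' x y
    · rw [hb, hi]
    · omega
  · have hprev := hhor' (x - 1) y
    rw [sub_add_cancel] at hprev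
    obtain ⟨-, hb, hi⟩ | ⟨-, hi, -⟩ := hprev
    · rw [hb, hi, Nat.add_sub_cancel]
    · omega
  · obtain ⟨hin, -⟩ | ⟨-, hfirst, hlr⟩ := hhor' x y
    · omega
    · exact ⟨hfirst, hlr⟩
  · rw [hFG, hFG]
    exact hver x y

theorem tilesPlane_barTiles_iff : TilesPlane (barTiles B) ↔ BarsTilePlane B :=
  ⟨barsTilePlane_of_tilesPlane_barTiles, tilesPlane_barTiles_of_barsTilePlane⟩

end BarTiles

def padTile (c : ℕ) : WangTile := (c, 2, c, c)

theorem padTile_injective : Function.Injective padTile := fun _ _ h => congrArg Prod.fst h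

def padTiles (T : Finset WangTile) : Finset WangTile :=
  ((tileSetColors T).filter (· % 3 = 0)).image padTile

theorem colors_padTile (c : ℕ) : (padTile c).colors = {c, 2} := by
  ext
  simp [padTile, WangTile.colors, WangTile.north, WangTile.east, WangTile.south, WangTile.west,
    or_comm]

theorem tileSetColors_union_padTiles {T : Finset WangTile}
    (h : ∃ c ∈ tileSetColors T, c % 3 = 0) :
    tileSetColors (T ∪ padTiles T) = insert 2 (tileSetColors T) := by
  obtain ⟨c₀, hc₀, hc₀3⟩ := h
  rw [tileSetColors, union_biUnion, ← tileSetColors, padTiles, image_biUnion]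
  simp_rw [colors_padTile]
  ext c
  simp only [mem_union, mem_biUnion, mem_insert, mem_singleton]
  constructor
  · rintro (hc | ⟨a, ha, rfl | rfl⟩)
    · exact .inr hc
    · exact .inr (mem_filter.1 ha).1
    · exact .inl rfl
  · rintro (rfl | hc)
    · exact .inr ⟨c₀, mem_filter.2 ⟨hc₀, hc₀3⟩, .inr rfl⟩
    · exact .inl hc

theorem card_union_padTiles {T : Finset WangTile} (hT : ∀ t ∈ T, t.east ≠ 2) :
    (T ∪ padTiles T).card = T.card + ((tileSetColors T).filter (· % 3 = 0)).card := by
  rw [card_union_of_disjoint, padTiles, card_image_of_injective _ padTile_injective]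
  exact disjoint_left.2 fun t ht hpad => by
    obtain ⟨c, -, rfl⟩ := mem_image.1 hpad
    exact hT _ ht rfl

section Counting

open WangBar

variable {B : Finset WangBar}

theorem mod_three_ne_two_of_mem_barTiles {t : WangTile} {c : ℕ} (ht : t ∈ barTiles B)
    (hc : c ∈ t.colors) : c % 3 ≠ 2 := by
  obtain ⟨b, -, i, -, rfl⟩ := mem_barTiles.1 ht
  exact mod_three_ne_two_of_mem_colors_cellTile hc

theorem filter_barTiles_west_mod_three_eq_zero (hB : ∀ b ∈ B, b.IsValid) :
    (barTiles B).filter (·.west % 3 = 0) = B.image (·.cellTile 0) := by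
  ext t
  simp only [mem_filter, mem_barTiles, mem_image]
  constructor
  · rintro ⟨⟨b, hb, i, -, rfl⟩, hi⟩
    exact ⟨b, hb, by rw [cellTile_west_mod_three_eq_zero_iff.1 hi]⟩
  · rintro ⟨b, hb, rfl⟩
    exact ⟨⟨b, hb, 0, (hB b hb).1, rfl⟩, cellTile_west_mod_three_eq_zero_iff.2 rfl⟩

theorem west_injOn_filter_barTiles :
    Set.InjOn WangTile.west ((barTiles B).filter (¬ ·.west % 3 = 0)) := by
  intro t ht t' ht' h
  simp only [coe_filter, Set.mem_ofPred_eq, mem_barTiles] at ht ht'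
  obtain ⟨⟨b, -, i, -, rfl⟩, hi⟩ := ht
  obtain ⟨⟨b', -, i', -, rfl⟩, hi'⟩ := ht'
  rw [cellTile_west_mod_three_eq_zero_iff] at hi hi'
  simp only [cellTile, WangTile.west, if_neg hi, if_neg hi', innerColor_inj] at h
  rw [h.1, h.2]

theorem image_west_filter_barTiles :
    ((barTiles B).filter (¬ ·.west % 3 = 0)).image WangTile.west =
      (tileSetColors (barTiles B)).filter (¬ · % 3 = 0) := by
  ext c
  simp only [mem_image, mem_filter]
  constructor
  · rintro ⟨t, ⟨ht, hc⟩, rfl⟩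
    exact ⟨mem_biUnion.2 ⟨t, ht, t.west_mem_colors⟩, hc⟩
  · rintro ⟨hcC, hc⟩
    obtain ⟨t, ht, hct⟩ := mem_biUnion.1 hcC
    obtain ⟨b, hb, i, hi, rfl⟩ := mem_barTiles.1 ht
    simp only [WangTile.colors, mem_insert, mem_singleton] at hct
    rcases hct with rfl | rfl | rfl | rfl
    · simp [cellTile, WangTile.north] at hc
    · by_cases hlast : i + 1 = b.len
      · simp [cellTile, WangTile.east, hlast] at hc
      · rw [cellTile_east_eq_west_succ hlast] at hc ⊢
        exact ⟨_, ⟨mem_barTiles.2 ⟨b, hb, i + 1, by omega, rfl⟩, hc⟩, rfl⟩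
    · simp [cellTile, WangTile.south] at hc
    · exact ⟨_, ⟨ht, hc⟩, rfl⟩

theorem card_barTiles (hB : ∀ b ∈ B, b.IsValid) :
    (barTiles B).card = B.card + ((tileSetColors (barTiles B)).filter (¬ · % 3 = 0)).card := by
  rw [← card_filter_add_card_filter_not (·.west % 3 = 0),
    filter_barTiles_west_mod_three_eq_zero hB,
    card_image_of_injOn (cellTile_zero_injOn.mono fun b hb => hB b hb),
    ← image_west_filter_barTiles, card_image_of_injOn west_injOn_filter_barTiles]

end Counting

section Reduction

open WangBar

variable {B : Finset WangBar}

def reductionTiles (B : Finset WangBar) : Finset WangTile := barTiles B ∪ padTiles (barTiles B)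

theorem tilesPlane_reductionTiles_iff : TilesPlane (reductionTiles B) ↔ BarsTilePlane B := by
  refine ⟨fun ⟨f, hf⟩ => tilesPlane_barTiles_iff.1 ⟨f, ?_⟩,
    fun h => (tilesPlane_barTiles_iff.2 h).mono subset_union_left⟩
  refine hf.of_union_of_east_ne_west fun s hs t ht hst => ?_
  obtain ⟨c, -, rfl⟩ := mem_image.1 hs
  rcases mem_union.1 ht with ht | ht
  · exact mod_three_ne_two_of_mem_barTiles ht t.west_mem_colors (by rw [← hst]; rfl)
  · obtain ⟨c', hc', rfl⟩ := mem_image.1 ht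
    have := (mem_filter.1 hc').2
    simp only [padTile, WangTile.east, WangTile.west] at hst
    omega

theorem colorDeficiency_reductionTiles (hB : ∀ b ∈ B, b.IsValid) :
    colorDeficiency (reductionTiles B) = B.card - 1 := by
  rcases B.eq_empty_or_nonempty with rfl | ⟨b, hb⟩
  · rfl
  have hC := card_filter_add_card_filter_not (s := tileSetColors (barTiles B)) (· % 3 = 0)
  have hcolor : 3 * b.top.getD 0 0 ∈ tileSetColors (barTiles B) :=
    mem_biUnion.2 ⟨_, mem_barTiles.2 ⟨b, hb, 0, (hB b hb).1, rfl⟩, WangTile.north_mem_colors _⟩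
  have h2 : 2 ∉ tileSetColors (barTiles B) := fun h =>
    let ⟨_, ht, hc⟩ := mem_biUnion.1 h
    mod_three_ne_two_of_mem_barTiles ht hc rfl
  have heast (t) (ht : t ∈ barTiles B) : t.east ≠ 2 := fun h =>
    mod_three_ne_two_of_mem_barTiles ht t.east_mem_colors (by rw [h])
  rw [colorDeficiency, reductionTiles, card_union_padTiles heast,
    tileSetColors_union_padTiles ⟨_, hcolor, by omega⟩, card_insert_of_notMem h2,
    card_barTiles hB]
  omega

end Reduction

section ListReduction

open Primrec WangBar

def barTileList (l : List WangBar) : List WangTile :=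
  l.flatMap fun b => (List.range b.len).map b.cellTile

def WangTile.colorList (t : WangTile) : List ℕ := [t.north, t.east, t.south, t.west]

def padTileList (ts : List WangTile) : List WangTile :=
  ((ts.flatMap WangTile.colorList).filter (· % 3 = 0)).map padTile

theorem toFinset_barTileList (l : List WangBar) :
    (barTileList l).toFinset = barTiles l.toFinset := by
  ext
  simp [barTileList, mem_barTiles]

theorem toFinset_padTileList (ts : List WangTile) :
    (padTileList ts).toFinset = padTiles ts.toFinset := by
  ext
  simp [padTileList, padTiles, tileSetColors, WangTile.colorList, WangTile.colors]

theorem primrec_innerColor : Primrec₂ innerColor :=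
  succ.comp (nat_mul.comp (const 3) (Primrec₂.natPair.comp (Primrec.encode.comp fst) snd))

theorem primrec_cellTile : Primrec₂ cellTile := by
  exact (nat_mul.comp (const 3) ((list_getD 0).comp (fst.comp fst) snd)).pair <|
    (Primrec.ite (Primrec.eq.comp (succ.comp snd) (list_length.comp (fst.comp fst)))
      (nat_mul.comp (const 3) (snd.comp (snd.comp (snd.comp fst))))
      (primrec_innerColor.comp fst (succ.comp snd))).pair <|
    (nat_mul.comp (const 3) ((list_getD 0).comp (fst.comp (snd.comp fst)) snd)).pair <|
    Primrec.ite (Primrec.eq.comp snd (const 0))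
      (nat_mul.comp (const 3) (fst.comp (snd.comp (snd.comp fst))))
      (primrec_innerColor.comp fst snd)

theorem primrec_barTileList : Primrec barTileList :=
  list_flatMap Primrec.id <| list_map (list_range.comp (list_length.comp (fst.comp snd)))
    (primrec_cellTile.comp (snd.comp fst) snd)

theorem primrec_padTileList : Primrec padTileList := by
  have hcolors : Primrec WangTile.colorList :=
    list_cons.comp fst <| list_cons.comp (fst.comp snd) <|
      list_cons.comp (fst.comp (snd.comp snd)) <| list_cons.comp (snd.comp (snd.comp snd)) <|
      const []
  have hmod : PrimrecPred fun c : ℕ => c % 3 = 0 :=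
    Primrec.eq.comp (nat_mod.comp Primrec.id (const 3)) (const 0)
  have hpad : Primrec padTile := Primrec.id.pair <| (const 2).pair <| Primrec.id.pair Primrec.id
  exact list_map ((listFilter hmod).comp (list_flatMap Primrec.id (hcolors.comp snd)))
    (hpad.comp snd).to₂

theorem exists_primrec_encode_reductionTiles :
    ∃ c : ℕ → ℕ, Primrec c ∧ ∀ B, c (encode B) = encode (reductionTiles B) :=
  exists_primrec_encode_finset_map
    (F := fun l => barTileList l ++ padTileList (barTileList l))
    (list_append.comp primrec_barTileList (primrec_padTileList.comp primrec_barTileList))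
    fun l => by
      rw [List.toFinset_append, toFinset_padTileList, toFinset_barTileList, reductionTiles]

end ListReduction

/-- **Jeandel–Rolin.**  If the tiling problem for `k` Wang bars is undecidable, then
the tiling problem for Wang tiles with color deficiency `k - 1` is undecidable. -/
theorem wang_bars_undecidable_implies_color_deficiency_undecidable :
    ∀ k : ℕ, 1 ≤ k →
      (¬ ∃ g : ℕ → Bool, Computable g ∧
          ∀ B : Finset WangBar, B.card = k → (∀ b ∈ B, b.IsValid) →
            (g (Encodable.encode B) = true ↔ BarsTilePlane B)) →
      (¬ ∃ g : ℕ → Bool, Computable g ∧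
          ∀ T : Finset WangTile, colorDeficiency T = k - 1 →
            (g (Encodable.encode T) = true ↔ TilesPlane T)) := by
  rintro k - hbars ⟨g, hg, hspec⟩
  obtain ⟨c, hc, hcode⟩ := exists_primrec_encode_reductionTiles
  refine hbars ⟨g ∘ c, hg.comp hc.to_comp, fun B hcard hB => ?_⟩
  rw [Function.comp_apply, hcode, hspec _ (hcard ▸ colorDeficiency_reductionTiles hB)]
  exact tilesPlane_reductionTiles_iff
end

section
/- (Cut lemma) Let B be a finite set of Wang bars, let b ∈ B be a bar of length l ≥ 2, and let B' be obtained from B by replacing b with two bars: one of length 1 carrying the first top color, first bottom color and the left side color of b, and one of length l−1 carrying the remaining top and bottom colors and the right side color of b, where both new vertical sides (the right side of the first piece and the left side of the second piece) are assigned a common color not occurring anywhere in B. Then B' tiles the plane if and only if B tiles the plane. -/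
/-- The set of colors occurring (on top, bottom, left or right) in a Wang bar. -/
def barColors (b : WangBar) : Finset ℕ := b.top.toFinset ∪ b.bottom.toFinset ∪ {b.left, b.right}

/-- The set of colors occurring anywhere in a finite set of Wang bars. -/
def setColors (B : Finset WangBar) : Finset ℕ := B.biUnion barColors

def cutF (b b1 b2 : WangBar) (f : ℤ × ℤ → WangBar × ℕ) (p : ℤ × ℤ) : WangBar × ℕ :=
  if (f p).1 = b then (if (f p).2 = 0 then (b1, 0) else (b2, (f p).2 - 1)) else f p

def glueF (b b1 b2 : WangBar) (f : ℤ × ℤ → WangBar × ℕ) (p : ℤ × ℤ) : WangBar × ℕ :=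
  if (f p).1 = b1 then (b, 0) else if (f p).1 = b2 then (b, (f p).2 + 1) else f p

/-- **Cut lemma.**  Replacing a bar `b` of length `l ≥ 2` of `B` by its first cell
and its remaining `l - 1` cells, with a fresh common color `c` (not occurring
anywhere in `B`) on the two new vertical sides, yields a set of bars that tiles the
plane if and only if `B` does. -/
theorem cut_lemma (B : Finset WangBar) (b : WangBar) (c : ℕ)
    (hvalid : ∀ u ∈ B, u.IsValid) (hb : b ∈ B) (hlen : 2 ≤ b.len)
    (hc : c ∉ setColors B) :
    BarsTilePlane
      (insert (b.top.take 1, b.bottom.take 1, b.left, c)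
        (insert (b.top.drop 1, b.bottom.drop 1, c, b.right) (B.erase b))) ↔
    BarsTilePlane B := by
  set b1 : WangBar := (b.top.take 1, b.bottom.take 1, b.left, c) with hb1def
  set b2 : WangBar := (b.top.drop 1, b.bottom.drop 1, c, b.right) with hb2def
  have hcu : ∀ u ∈ B, c ∉ barColors u := fun u hu hmem => hc (Finset.mem_biUnion.2 ⟨u, hu, hmem⟩)
  have hlc : ∀ u ∈ B, u.left ≠ c := fun u hu h => hcu u hu (by rw [← h]; simp [barColors])
  have hrc : ∀ u ∈ B, u.right ≠ c := fun u hu h => hcu u hu (by rw [← h]; simp [barColors])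
  have hlen' : 2 ≤ b.top.length := hlen
  have hbotlen : b.bottom.length = b.len := ((hvalid b hb).2).symm
  have h1len : b1.len = 1 := by
    rw [hb1def]; simp only [WangBar.len, List.length_take]; omega
  have h2len : b2.len = b.len - 1 := by
    rw [hb2def]; simp only [WangBar.len, List.length_drop]; rfl
  have h1left : b1.left = b.left := rfl
  have h1right : b1.right = c := rfl
  have h2left : b2.left = c := rfl
  have h2right : b2.right = b.right := rfl
  have hblc : b.left ≠ c := hlc b hb
  have hbrc : b.right ≠ c := hrc b hb
  have hne12 : b1 ≠ b2 := fun h => hblc (congrArg (fun u => u.2.2.1) h)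
  have hb1nb : b1 ≠ b := fun h => hbrc ((congrArg (fun u => u.2.2.2) h).symm)
  have hb2nb : b2 ≠ b := fun h => hblc ((congrArg (fun u => u.2.2.1) h).symm)
  have hb1nB : b1 ∉ B := fun h => hrc b1 h rfl
  have hb2nB : b2 ∉ B := fun h => hlc b2 h rfl
  have hmemB' : ∀ u : WangBar, u ∈ insert b1 (insert b2 (B.erase b)) ↔
      (u = b1 ∨ u = b2 ∨ (u ∈ B ∧ u ≠ b)) := by
    intro u; simp [Finset.mem_insert, Finset.mem_erase]; tauto
  have htop1 : b1.top.getD 0 0 = b.top.getD 0 0 := by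
    rw [hb1def]; simp [WangBar.top, List.getD_eq_getElem?_getD, List.getElem?_take]
  have hbot1 : b1.bottom.getD 0 0 = b.bottom.getD 0 0 := by
    rw [hb1def]; simp [WangBar.bottom, List.getD_eq_getElem?_getD, List.getElem?_take]
  have htop2 : ∀ j, b2.top.getD j 0 = b.top.getD (j+1) 0 := by
    intro j; rw [hb2def]
    simp [WangBar.top, List.getD_eq_getElem?_getD, List.getElem?_drop, Nat.add_comm]
  have hbot2 : ∀ j, b2.bottom.getD j 0 = b.bottom.getD (j+1) 0 := by
    intro j; rw [hb2def]
    simp [WangBar.bottom, List.getD_eq_getElem?_getD, List.getElem?_drop, Nat.add_comm]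
  constructor
  · -- B' tiles → B tiles
    rintro ⟨f', hf1, hf2, hf3, hf4, hf5, hf6⟩
    have hglue1 : ∀ p, (f' p).1 = b1 → glueF b b1 b2 f' p = (b, 0) := by
      intro p h; simp [glueF, h]
    have hglue2 : ∀ p, (f' p).1 = b2 → glueF b b1 b2 f' p = (b, (f' p).2 + 1) := by
      intro p h; simp [glueF, h, Ne.symm hne12]
    have hglueo : ∀ p, (f' p).1 ≠ b1 → (f' p).1 ≠ b2 → glueF b b1 b2 f' p = f' p := by
      intro p h1 h2; simp [glueF, h1, h2]
    have hmem : ∀ p, (f' p).1 = b1 ∨ (f' p).1 = b2 ∨ ((f' p).1 ∈ B ∧ (f' p).1 ≠ b) :=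
      fun p => (hmemB' _).1 (hf1 p)
    have key1 : ∀ x y : ℤ, (f' (x, y)).1 = b1 → f' (x + 1, y) = (b2, 0) := by
      intro x y h
      have hi : (f' (x, y)).2 = 0 := by
        have := hf2 (x, y); rw [h, h1len] at this; omega
      obtain ⟨hz, hcol⟩ := hf5 x y (by rw [h, hi, h1len])
      rw [h, h1right] at hcol
      rcases hmem (x + 1, y) with hv | hv | ⟨hvB, _⟩
      · exfalso; rw [hv, h1left] at hcol; exact hblc hcol.symm
      · exact Prod.ext hv hz
      · exact absurd hcol.symm (hlc _ hvB)
    have key2 : ∀ x y : ℤ, f' (x, y) = (b2, 0) → f' (x - 1, y) = (b1, 0) := by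
      intro x y h
      have hx : (x - 1 + 1 : ℤ) = x := by ring
      rcases hq : f' (x - 1, y) with ⟨u, j⟩
      have hj : j < u.len := by have := hf2 (x - 1, y); rw [hq] at this; exact this
      have hend : j + 1 = u.len := by
        by_contra hne
        have h3 := hf3 (x - 1) y (by rw [hq]; simp only; omega)
        rw [hq, hx, h] at h3
        have := congrArg Prod.snd h3; simp at this
      have h5 := hf5 (x - 1) y (by rw [hq]; exact hend)
      rw [hq, hx, h] at h5
      have hur : u.right = c := h5.2
      have hm := hmem (x - 1, y)
      rw [hq] at hm
      rcases hm with hu | hu | ⟨huB, _⟩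
      · have hu' : u = b1 := hu
        have hj0 : j = 0 := by rw [hu', h1len] at hend; omega
        rw [hu', hj0]
      · have hu' : u = b2 := hu
        rw [hu', h2right] at hur; exact absurd hur hbrc
      · have huB' : u ∈ B := huB
        exact absurd hur (hrc _ huB')
    refine ⟨glueF b b1 b2 f', ?_, ?_, ?_, ?_, ?_, ?_⟩
    · intro p
      rcases hmem p with h | h | ⟨hB, _⟩
      · rw [hglue1 p h]; exact hb
      · rw [hglue2 p h]; exact hb
      · rw [hglueo p (fun hh => hb1nB (hh ▸ hB)) (fun hh => hb2nB (hh ▸ hB))]; exact hB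
    · intro p
      rcases hmem p with h | h | ⟨hB, _⟩
      · rw [hglue1 p h]; exact lt_of_lt_of_le two_pos hlen
      · rw [hglue2 p h]
        have := hf2 p; rw [h, h2len] at this
        show (f' p).2 + 1 < b.len; omega
      · rw [hglueo p (fun hh => hb1nB (hh ▸ hB)) (fun hh => hb2nB (hh ▸ hB))]; exact hf2 p
    · intro x y hlt
      rcases hmem (x, y) with h | h | ⟨hB, _⟩
      · have hn := key1 x y h
        have hg : glueF b b1 b2 f' (x + 1, y) = (b, 1) := by
          rw [hglue2 _ (by rw [hn]), hn]
        rw [hglue1 _ h, hg]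
      · rw [hglue2 _ h] at hlt ⊢
        have hj1 : (f' (x, y)).2 + 1 < b2.len := by
          have h2 := h2len
          have : (f' (x, y)).2 + 1 + 1 < b.len := hlt
          omega
        have h3 := hf3 x y (by rw [h]; exact hj1)
        rw [h] at h3
        have hg : glueF b b1 b2 f' (x + 1, y) = (b, (f' (x, y)).2 + 1 + 1) := by
          rw [hglue2 _ (by rw [h3]), h3]
        rw [hg]
      · have ne1 : (f' (x, y)).1 ≠ b1 := fun hh => hb1nB (hh ▸ hB)
        have ne2 : (f' (x, y)).1 ≠ b2 := fun hh => hb2nB (hh ▸ hB)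
        rw [hglueo _ ne1 ne2] at hlt ⊢
        have h3 := hf3 x y hlt
        rw [hglueo _ (by rw [h3]; exact ne1) (by rw [h3]; exact ne2), h3]
    · intro x y hpos
      rcases hmem (x, y) with h | h | ⟨hB, _⟩
      · rw [hglue1 _ h] at hpos; simp at hpos
      · rw [hglue2 _ h] at hpos ⊢
        by_cases hj : 0 < (f' (x, y)).2
        · have h4 := hf4 x y hj
          rw [h] at h4
          have hg : glueF b b1 b2 f' (x - 1, y) = (b, ((f' (x, y)).2 - 1) + 1) := by
            rw [hglue2 _ (by rw [h4]), h4]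
          rw [hg]
          simp only [Prod.mk.injEq, true_and]
          omega
        · have hfz : f' (x, y) = (b2, 0) := Prod.ext h (by omega)
          have hk := key2 x y hfz
          rw [hglue1 _ (by rw [hk])]
          simp only [Prod.mk.injEq, true_and]
          omega
      · have ne1 : (f' (x, y)).1 ≠ b1 := fun hh => hb1nB (hh ▸ hB)
        have ne2 : (f' (x, y)).1 ≠ b2 := fun hh => hb2nB (hh ▸ hB)
        rw [hglueo _ ne1 ne2] at hpos ⊢
        have h4 := hf4 x y hpos
        rw [hglueo _ (by rw [h4]; exact ne1) (by rw [h4]; exact ne2), h4]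
    · intro x y heq
      rcases hmem (x, y) with h | h | ⟨hB, _⟩
      · rw [hglue1 _ h] at heq
        exfalso
        have : (1 : ℕ) = b.len := heq
        omega
      · rw [hglue2 _ h] at heq ⊢
        have heq' : (f' (x, y)).2 + 1 + 1 = b.len := heq
        have hj : (f' (x, y)).2 < b2.len := by have := hf2 (x, y); rw [h] at this; exact this
        have hend : (f' (x, y)).2 + 1 = b2.len := by have h2 := h2len; omega
        obtain ⟨hz, hcol⟩ := hf5 x y (by rw [h]; exact hend)
        rw [h] at hcol
        rcases hmem (x + 1, y) with hv | hv | ⟨hvB, _⟩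
        · rw [hglue1 _ hv]
          rw [hv, h1left] at hcol
          rw [h2right] at hcol
          exact ⟨rfl, hcol⟩
        · exfalso
          have hk := key2 (x + 1) y (Prod.ext hv hz)
          have hx : (x + 1 - 1 : ℤ) = x := by ring
          rw [hx] at hk
          rw [hk] at h
          exact hne12 h
        · have ne1 : (f' (x + 1, y)).1 ≠ b1 := fun hh => hb1nB (hh ▸ hvB)
          have ne2 : (f' (x + 1, y)).1 ≠ b2 := fun hh => hb2nB (hh ▸ hvB)
          rw [hglueo _ ne1 ne2]
          rw [h2right] at hcol
          exact ⟨hz, hcol⟩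
      · have ne1 : (f' (x, y)).1 ≠ b1 := fun hh => hb1nB (hh ▸ hB)
        have ne2 : (f' (x, y)).1 ≠ b2 := fun hh => hb2nB (hh ▸ hB)
        rw [hglueo _ ne1 ne2] at heq ⊢
        obtain ⟨hz, hcol⟩ := hf5 x y heq
        rcases hmem (x + 1, y) with hv | hv | ⟨hvB, _⟩
        · rw [hglue1 _ hv]
          rw [hv, h1left] at hcol
          exact ⟨rfl, hcol⟩
        · exfalso
          have hk := key2 (x + 1) y (Prod.ext hv hz)
          have hx : (x + 1 - 1 : ℤ) = x := by ring
          rw [hx] at hk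
          rw [hk] at ne1
          exact ne1 rfl
        · have nv1 : (f' (x + 1, y)).1 ≠ b1 := fun hh => hb1nB (hh ▸ hvB)
          have nv2 : (f' (x + 1, y)).1 ≠ b2 := fun hh => hb2nB (hh ▸ hvB)
          rw [hglueo _ nv1 nv2]
          exact ⟨hz, hcol⟩
    · have Htop : ∀ p, (glueF b b1 b2 f' p).1.top.getD (glueF b b1 b2 f' p).2 0 =
          (f' p).1.top.getD (f' p).2 0 := by
        intro p
        rcases hmem p with h | h | ⟨hB, _⟩
        · have h0 : (f' p).2 = 0 := by have := hf2 p; rw [h, h1len] at this; omega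
          rw [hglue1 _ h, h, h0]
          exact htop1.symm
        · rw [hglue2 _ h, h]
          exact (htop2 _).symm
        · rw [hglueo _ (fun hh => hb1nB (hh ▸ hB)) (fun hh => hb2nB (hh ▸ hB))]
      have Hbot : ∀ p, (glueF b b1 b2 f' p).1.bottom.getD (glueF b b1 b2 f' p).2 0 =
          (f' p).1.bottom.getD (f' p).2 0 := by
        intro p
        rcases hmem p with h | h | ⟨hB, _⟩
        · have h0 : (f' p).2 = 0 := by have := hf2 p; rw [h, h1len] at this; omega
          rw [hglue1 _ h, h, h0]
          exact hbot1.symm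
        · rw [hglue2 _ h, h]
          exact (hbot2 _).symm
        · rw [hglueo _ (fun hh => hb1nB (hh ▸ hB)) (fun hh => hb2nB (hh ▸ hB))]
      intro x y
      rw [Htop (x, y), Hbot (x, y + 1)]
      exact hf6 x y
  · -- B tiles → B' tiles
    rintro ⟨f, hf1, hf2, hf3, hf4, hf5, hf6⟩
    have hcut0 : ∀ p, f p = (b, 0) → cutF b b1 b2 f p = (b1, 0) := by
      intro p h; simp [cutF, h]
    have hcutpos : ∀ p i, f p = (b, i) → i ≠ 0 → cutF b b1 b2 f p = (b2, i - 1) := by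
      intro p i h h0; simp [cutF, h, h0]
    have hcutne : ∀ p, (f p).1 ≠ b → cutF b b1 b2 f p = f p := by
      intro p h; simp [cutF, h]
    refine ⟨cutF b b1 b2 f, ?_, ?_, ?_, ?_, ?_, ?_⟩
    · intro p
      rcases hfp : f p with ⟨u, i⟩
      by_cases h : u = b
      · rw [h] at hfp
        by_cases h0 : i = 0
        · rw [hcut0 p (h0 ▸ hfp)]
          exact Finset.mem_insert_self _ _
        · rw [hcutpos p i hfp h0]
          exact Finset.mem_insert_of_mem (Finset.mem_insert_self _ _)
      · rw [hcutne p (by rw [hfp]; exact h), hfp]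
        exact (hmemB' u).2 (Or.inr (Or.inr ⟨by have := hf1 p; rwa [hfp] at this, h⟩))
    · intro p
      rcases hfp : f p with ⟨u, i⟩
      have hi : i < u.len := by have := hf2 p; rwa [hfp] at this
      by_cases h : u = b
      · rw [h] at hfp hi
        by_cases h0 : i = 0
        · rw [hcut0 p (h0 ▸ hfp)]; rw [h1len]; norm_num
        · rw [hcutpos p i hfp h0]
          show i - 1 < b2.len
          rw [h2len]; omega
      · rw [hcutne p (by rw [hfp]; exact h), hfp]; exact hi
    · intro x y hlt
      rcases hfp : f (x, y) with ⟨u, i⟩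
      have hi : i < u.len := by have := hf2 (x, y); rwa [hfp] at this
      by_cases h : u = b
      · rw [h] at hfp hi
        by_cases h0 : i = 0
        · rw [hcut0 (x, y) (h0 ▸ hfp)] at hlt
          rw [h1len] at hlt; omega
        · rw [hcutpos (x, y) i hfp h0] at hlt ⊢
          have hlt' : i - 1 + 1 < b2.len := hlt
          have hi1 : i + 1 < b.len := by have h2 := h2len; omega
          have h3 : f (x + 1, y) = (b, i + 1) := by
            have t := hf3 x y (by rw [hfp]; exact hi1); rw [hfp] at t; exact t
          rw [hcutpos (x + 1, y) (i + 1) h3 (by omega)]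
          simp only [Prod.mk.injEq, true_and]
          omega
      · rw [hcutne (x, y) (by rw [hfp]; exact h), hfp] at hlt ⊢
        have h3 : f (x + 1, y) = (u, i + 1) := by
          have t := hf3 x y (by rw [hfp]; exact hlt); rw [hfp] at t; exact t
        rw [hcutne (x + 1, y) (by rw [h3]; exact h), h3]
    · intro x y hpos
      rcases hfp : f (x, y) with ⟨u, i⟩
      by_cases h : u = b
      · rw [h] at hfp
        by_cases h0 : i = 0
        · rw [hcut0 (x, y) (h0 ▸ hfp)] at hpos; simp at hpos
        · rw [hcutpos (x, y) i hfp h0] at hpos ⊢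
          have hpos' : 0 < i - 1 := hpos
          have h4 : f (x - 1, y) = (b, i - 1) := by
            have t := hf4 x y (by rw [hfp]; show 0 < i; omega); rw [hfp] at t; exact t
          rw [hcutpos (x - 1, y) (i - 1) h4 (by omega)]
      · rw [hcutne (x, y) (by rw [hfp]; exact h), hfp] at hpos ⊢
        have h4 : f (x - 1, y) = (u, i - 1) := by
          have t := hf4 x y (by rw [hfp]; exact hpos); rw [hfp] at t; exact t
        rw [hcutne (x - 1, y) (by rw [h4]; exact h), h4]
    · intro x y heq
      rcases hfp : f (x, y) with ⟨u, i⟩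
      have hi : i < u.len := by have := hf2 (x, y); rwa [hfp] at this
      by_cases h : u = b
      · rw [h] at hfp hi
        by_cases h0 : i = 0
        · rw [hcut0 (x, y) (h0 ▸ hfp)]
          have h3 : f (x + 1, y) = (b, 1) := by
            have t := hf3 x y (by rw [hfp]; show i + 1 < b.len; omega); rw [hfp, h0] at t; exact t
          rw [hcutpos (x + 1, y) 1 h3 one_ne_zero]
          exact ⟨rfl, rfl⟩
        · rw [hcutpos (x, y) i hfp h0] at heq ⊢
          have heq' : i - 1 + 1 = b2.len := heq
          have hi1 : i + 1 = b.len := by have h2 := h2len; omega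
          obtain ⟨hz, hcol⟩ := hf5 x y (by rw [hfp]; exact hi1)
          rcases hgq : f (x + 1, y) with ⟨v, j⟩
          rw [hfp, hgq] at hcol
          rw [hgq] at hz
          have hj0 : j = 0 := hz
          by_cases hv : v = b
          · rw [hcut0 (x + 1, y) (by rw [hgq, hv, hj0])]
            refine ⟨rfl, ?_⟩
            show b2.right = b1.left
            rw [h2right, h1left]
            exact hcol.trans (congrArg (fun w : WangBar => w.2.2.1) hv)
          · rw [hcutne (x + 1, y) (by rw [hgq]; exact hv), hgq]
            refine ⟨hz, ?_⟩
            show b2.right = v.left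
            rw [h2right]
            exact hcol
      · rw [hcutne (x, y) (by rw [hfp]; exact h), hfp] at heq ⊢
        obtain ⟨hz, hcol⟩ := hf5 x y (by rw [hfp]; exact heq)
        rcases hgq : f (x + 1, y) with ⟨v, j⟩
        rw [hfp, hgq] at hcol
        rw [hgq] at hz
        by_cases hv : v = b
        · rw [hcut0 (x + 1, y) (by rw [hgq, hv, show j = 0 from hz])]
          refine ⟨rfl, ?_⟩
          rw [hcol]
          show v.left = b.left
          rw [hv]
        · rw [hcutne (x + 1, y) (by rw [hgq]; exact hv), hgq]
          exact ⟨hz, hcol⟩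
    · have Htop : ∀ p, (cutF b b1 b2 f p).1.top.getD (cutF b b1 b2 f p).2 0 =
          (f p).1.top.getD (f p).2 0 := by
        intro p
        rcases hfp : f p with ⟨u, i⟩
        by_cases h : u = b
        · rw [h] at hfp
          by_cases h0 : i = 0
          · rw [hcut0 p (h0 ▸ hfp), h, h0]
            exact htop1
          · rw [hcutpos p i hfp h0, h]
            show b2.top.getD (i - 1) 0 = b.top.getD i 0
            rw [htop2]
            congr 1
            omega
        · rw [hcutne p (by rw [hfp]; exact h), hfp]
      have Hbot : ∀ p, (cutF b b1 b2 f p).1.bottom.getD (cutF b b1 b2 f p).2 0 =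
          (f p).1.bottom.getD (f p).2 0 := by
        intro p
        rcases hfp : f p with ⟨u, i⟩
        by_cases h : u = b
        · rw [h] at hfp
          by_cases h0 : i = 0
          · rw [hcut0 p (h0 ▸ hfp), h, h0]
            exact hbot1
          · rw [hcutpos p i hfp h0, h]
            show b2.bottom.getD (i - 1) 0 = b.bottom.getD i 0
            rw [hbot2]
            congr 1
            omega
        · rw [hcutne p (by rw [hfp]; exact h), hfp]
      intro x y
      rw [Htop (x, y), Hbot (x, y + 1)]
      exact hf6 x y
end

section
/- Let B be a finite set of k Wang bars and let v be the number of distinct colors occurring on the left and right (vertical) sides of bars of B. Let T be the set of Wang tiles obtained from B by a sequence of t cutting operations, each replacing a bar of length l ≥ 2 by two bars of lengths 1 and l−1 with a color not yet used assigned to both new vertical sides, continued until all bars have length 1. Then T tiles the plane if and only if B tiles the plane, n(T) = k + t, c(T) ≥ v + t, and hence cd(T) = n(T) − c(T) ≤ k − v. -/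
set_option maxHeartbeats 1600000


/-- The set of colors occurring on the left and right (vertical) sides of bars of `B`. -/
def vertColors (B : Finset WangBar) : Finset ℕ := B.biUnion fun b => {b.left, b.right}

/-- One cutting operation: replace a bar `b ∈ B` of length `l ≥ 2` by two bars of
lengths `1` and `l - 1`, assigning a color `c` not yet used in `B` to both new
vertical sides. -/
def CutStep (B B' : Finset WangBar) : Prop :=
  ∃ b ∈ B, 2 ≤ b.len ∧ ∃ c, c ∉ setColors B ∧
    B' = insert (b.top.take 1, b.bottom.take 1, b.left, c)
          (insert (b.top.drop 1, b.bottom.drop 1, c, b.right) (B.erase b))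

-- auxiliary defs
def fwdMap (b : WangBar) (c : ℕ) (q : WangBar × ℕ) : WangBar × ℕ :=
  if q.1 = b then
    (if q.2 = 0 then (((b.top.take 1, b.bottom.take 1, b.left, c) : WangBar), 0)
     else (((b.top.drop 1, b.bottom.drop 1, c, b.right) : WangBar), q.2 - 1))
  else q

def bwdMap (b : WangBar) (c : ℕ) (q : WangBar × ℕ) : WangBar × ℕ :=
  if q.1 = ((b.top.take 1, b.bottom.take 1, b.left, c) : WangBar) then (b, 0)
  else if q.1 = ((b.top.drop 1, b.bottom.drop 1, c, b.right) : WangBar) then (b, q.2 + 1)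
  else q

lemma barColors_subset_setColors {B : Finset WangBar} {b : WangBar} (hb : b ∈ B) :
    barColors b ⊆ setColors B := fun x hx => Finset.mem_biUnion.2 ⟨b, hb, hx⟩

lemma left_mem_barColors (b : WangBar) : b.left ∈ barColors b := by
  simp [barColors]

lemma right_mem_barColors (b : WangBar) : b.right ∈ barColors b := by
  simp [barColors]

lemma cutstep_props {B B' : Finset WangBar} (h : CutStep B B') :
    (BarsTilePlane B' ↔ BarsTilePlane B) ∧ B'.card = B.card + 1 ∧
    (setColors B').card = (setColors B).card + 1 := by
  obtain ⟨b, hb, hlen, c, hc, rfl⟩ := h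
  set n1 : WangBar := (b.top.take 1, b.bottom.take 1, b.left, c) with hn1
  set n2 : WangBar := (b.top.drop 1, b.bottom.drop 1, c, b.right) with hn2
  have hbl : b.left ≠ c := fun h => hc (h ▸ barColors_subset_setColors hb (left_mem_barColors b))
  have hbr : b.right ≠ c := fun h => hc (h ▸ barColors_subset_setColors hb (right_mem_barColors b))
  have huL : ∀ u ∈ B, u.left ≠ c :=
    fun u hu h => hc (h ▸ barColors_subset_setColors hu (left_mem_barColors u))
  have huR : ∀ u ∈ B, u.right ≠ c :=
    fun u hu h => hc (h ▸ barColors_subset_setColors hu (right_mem_barColors u))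
  have hblen : 2 ≤ b.top.length := hlen
  have h1len : n1.len = 1 := by
    show (b.top.take 1).length = 1
    rw [List.length_take]; omega
  have h2len : n2.len + 1 = b.len := by
    show (b.top.drop 1).length + 1 = b.top.length
    rw [List.length_drop]; omega
  have h12 : n1 ≠ n2 := by
    intro h
    have : b.left = c := congrArg (fun q : WangBar => q.2.2.1) h
    exact hbl this
  have hbn1 : b ≠ n1 := by
    intro h
    have : b.len = 1 := by rw [h, h1len]
    omega
  have hbn2 : b ≠ n2 := by
    intro h
    have : b.len + 1 = b.len := by conv_lhs => rw [h, h2len]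
    omega
  have hn1B : n1 ∉ B := fun h => huR n1 h rfl
  have hn2B : n2 ∉ B := fun h => huL n2 h rfl
  refine ⟨?_, ?_, ?_⟩
  · -- tiling equivalence
    have hne21 : ((b.top.drop 1, b.bottom.drop 1, c, b.right) : WangBar) ≠
        (b.top.take 1, b.bottom.take 1, b.left, c) := by
      rw [← hn1, ← hn2]; exact h12.symm
    have EA : ∀ q : WangBar × ℕ, q.1 = n1 → bwdMap b c q = (b, 0) := by
      intro q h
      have h' : q.1 = (b.top.take 1, b.bottom.take 1, b.left, c) := by simp only [h, hn1]
      unfold bwdMap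
      rw [if_pos h']
    have EB : ∀ q : WangBar × ℕ, q.1 = n2 → bwdMap b c q = (b, q.2 + 1) := by
      intro q h
      have h' : q.1 = (b.top.drop 1, b.bottom.drop 1, c, b.right) := by simp only [h, hn2]
      have h'' : q.1 ≠ (b.top.take 1, b.bottom.take 1, b.left, c) := by rw [h']; exact hne21
      unfold bwdMap
      rw [if_neg h'', if_pos h']
    have EC : ∀ q : WangBar × ℕ, q.1 ≠ n1 → q.1 ≠ n2 → bwdMap b c q = q := by
      intro q h1 h2
      have h1' := h1; rw [hn1] at h1'
      have h2' := h2; rw [hn2] at h2'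
      unfold bwdMap
      rw [if_neg h1', if_neg h2']
    have FA : ∀ q : WangBar × ℕ, q.1 = b → q.2 = 0 → fwdMap b c q = (n1, 0) := by
      intro q h h0
      unfold fwdMap
      rw [if_pos h, if_pos h0, ← hn1]
    have FS : ∀ q : WangBar × ℕ, q.1 = b → q.2 ≠ 0 → fwdMap b c q = (n2, q.2 - 1) := by
      intro q h h0
      unfold fwdMap
      rw [if_pos h, if_neg h0, ← hn2]
    have FN : ∀ q : WangBar × ℕ, q.1 ≠ b → fwdMap b c q = q := by
      intro q h
      unfold fwdMap
      rw [if_neg h]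
    constructor
    · -- B' tiles → B tiles
      rintro ⟨f, hf1, hf2, hf3, hf4, hf5, hf6⟩
      have hmem : ∀ p, (f p).1 = n1 ∨ (f p).1 = n2 ∨
          ((f p).1 ∈ B ∧ (f p).1 ≠ n1 ∧ (f p).1 ≠ n2) := by
        intro p
        rcases Finset.mem_insert.1 (hf1 p) with h | h
        · exact Or.inl h
        rcases Finset.mem_insert.1 h with h | h
        · exact Or.inr (Or.inl h)
        · have hB := Finset.mem_of_mem_erase h
          exact Or.inr (Or.inr ⟨hB, fun hx => hn1B (hx ▸ hB), fun hx => hn2B (hx ▸ hB)⟩)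
      have K1 : ∀ x y : ℤ, (f (x, y)).1 = n1 → f (x + 1, y) = (n2, 0) := by
        intro x y h
        have hidx : (f (x, y)).2 = 0 := by
          have h2 := hf2 (x, y); rw [h, h1len] at h2; omega
        obtain ⟨hz, hcol⟩ := hf5 x y (by rw [hidx, h, h1len])
        rw [h] at hcol
        have hcol' : (f (x + 1, y)).1.left = c := hcol.symm
        rcases hmem (x + 1, y) with h' | h' | h'
        · exfalso; rw [h'] at hcol'; exact hbl hcol'
        · exact Prod.ext_iff.2 ⟨h', hz⟩
        · exact absurd hcol' (huL _ h'.1)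
      have K2 : ∀ x y : ℤ, (f (x, y)).1 = n2 → (f (x, y)).2 = 0 → f (x - 1, y) = (n1, 0) := by
        intro x y h hz
        have hxx : x - 1 + 1 = x := by ring
        have h2 := hf2 (x - 1, y)
        rcases lt_or_eq_of_le (Nat.succ_le_of_lt h2) with hlt | heq
        · exfalso
          have hstep := hf3 (x - 1) y hlt
          rw [hxx] at hstep
          rw [hstep] at hz
          simp at hz
        · obtain ⟨hz5, hcol⟩ := hf5 (x - 1) y heq
          rw [hxx] at hz5 hcol
          have hcol' : (f (x - 1, y)).1.right = c := by rw [hcol, h]; rfl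
          rcases hmem (x - 1, y) with h' | h' | h'
          · have hidx : (f (x - 1, y)).2 = 0 := by
              have := hf2 (x - 1, y); rw [h', h1len] at this; omega
            exact Prod.ext_iff.2 ⟨h', hidx⟩
          · exfalso; rw [h'] at hcol'; exact hbr hcol'
          · exact absurd hcol' (huR _ h'.1)
      refine ⟨fun p => bwdMap b c (f p), ?_, ?_, ?_, ?_, ?_, ?_⟩
      · intro p
        beta_reduce
        rcases hmem p with h | h | ⟨hB, h1, h2⟩
        · rw [EA _ h]; exact hb
        · rw [EB _ h]; exact hb
        · rw [EC (f p) h1 h2]; exact hB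
      · intro p
        beta_reduce
        rcases hmem p with h | h | ⟨hB, h1, h2⟩
        · rw [EA _ h]; show (0:ℕ) < b.len; omega
        · rw [EB _ h]
          show (f p).2 + 1 < b.len
          have := hf2 p; rw [h] at this; omega
        · rw [EC (f p) h1 h2]; exact hf2 p
      · intro x y hlt
        beta_reduce at hlt ⊢
        rcases hmem (x, y) with h | h | ⟨hB, h1, h2⟩
        · rw [EA _ h] at hlt ⊢
          rw [K1 x y h, EB (n2, 0) rfl]
        · rw [EB _ h] at hlt ⊢
          have hlt' : (f (x, y)).2 + 1 + 1 < b.len := hlt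
          have hstep := hf3 x y (by rw [h]; omega)
          rw [h] at hstep
          rw [hstep, EB (n2, (f (x, y)).2 + 1) rfl]
        · rw [EC (f (x, y)) h1 h2] at hlt ⊢
          have hstep := hf3 x y hlt
          rw [hstep, EC ((f (x, y)).1, (f (x, y)).2 + 1) h1 h2]
      · intro x y hpos
        beta_reduce at hpos ⊢
        rcases hmem (x, y) with h | h | ⟨hB, h1, h2⟩
        · rw [EA _ h] at hpos; exact absurd hpos (lt_irrefl 0)
        · rw [EB _ h]
          by_cases hz : (f (x, y)).2 = 0
          · rw [K2 x y h hz, EA (n1, 0) rfl, hz]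
            rfl
          · have hstep := hf4 x y (Nat.pos_of_ne_zero hz)
            rw [h] at hstep
            rw [hstep, EB (n2, (f (x, y)).2 - 1) rfl]
            refine Prod.ext_iff.2 ⟨rfl, ?_⟩
            show (f (x, y)).2 - 1 + 1 = (f (x, y)).2 + 1 - 1
            omega
        · rw [EC (f (x, y)) h1 h2] at hpos ⊢
          have hstep := hf4 x y hpos
          rw [hstep, EC ((f (x, y)).1, (f (x, y)).2 - 1) h1 h2]
      · intro x y hend
        beta_reduce at hend ⊢
        rcases hmem (x, y) with h | h | ⟨hB, h1, h2⟩
        · rw [EA _ h] at hend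
          have hend' : (0:ℕ) + 1 = b.len := hend
          omega
        · rw [EB _ h] at hend ⊢
          have hend' : (f (x, y)).2 + 1 + 1 = b.len := hend
          obtain ⟨hz5, hcol⟩ := hf5 x y (by rw [h]; omega)
          rw [h] at hcol
          have hcol' : b.right = (f (x + 1, y)).1.left := hcol
          rcases hmem (x + 1, y) with h' | h' | ⟨hB', h1', h2'⟩
          · rw [EA _ h']
            refine ⟨rfl, ?_⟩
            rw [h'] at hcol'; exact hcol'
          · exfalso; rw [h'] at hcol'; exact hbr hcol'
          · rw [EC (f (x + 1, y)) h1' h2']; exact ⟨hz5, hcol'⟩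
        · rw [EC (f (x, y)) h1 h2] at hend ⊢
          obtain ⟨hz5, hcol⟩ := hf5 x y hend
          rcases hmem (x + 1, y) with h' | h' | ⟨hB', h1', h2'⟩
          · rw [EA _ h']
            refine ⟨rfl, ?_⟩
            rw [h'] at hcol; exact hcol
          · exfalso; rw [h'] at hcol; exact huR _ hB hcol
          · rw [EC (f (x + 1, y)) h1' h2']; exact ⟨hz5, hcol⟩
      · have HT : ∀ p, (bwdMap b c (f p)).1.top.getD (bwdMap b c (f p)).2 0 =
            (f p).1.top.getD (f p).2 0 := by
          intro p
          rcases hmem p with h | h | ⟨hB, h1, h2⟩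
          · rw [EA _ h]
            have hz : (f p).2 = 0 := by
              have := hf2 p; rw [h, h1len] at this; omega
            rw [hz, h]
            show b.top.getD 0 0 = (b.top.take 1).getD 0 0
            simp [List.getD_eq_getElem?_getD, List.getElem?_take]
          · rw [EB _ h, h]
            show b.top.getD ((f p).2 + 1) 0 = (b.top.drop 1).getD (f p).2 0
            simp [List.getD_eq_getElem?_getD, List.getElem?_drop, Nat.add_comm]
          · rw [EC (f p) h1 h2]
        have HB : ∀ p, (bwdMap b c (f p)).1.bottom.getD (bwdMap b c (f p)).2 0 =
            (f p).1.bottom.getD (f p).2 0 := by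
          intro p
          rcases hmem p with h | h | ⟨hB, h1, h2⟩
          · rw [EA _ h]
            have hz : (f p).2 = 0 := by
              have := hf2 p; rw [h, h1len] at this; omega
            rw [hz, h]
            show b.bottom.getD 0 0 = (b.bottom.take 1).getD 0 0
            simp [List.getD_eq_getElem?_getD, List.getElem?_take]
          · rw [EB _ h, h]
            show b.bottom.getD ((f p).2 + 1) 0 = (b.bottom.drop 1).getD (f p).2 0
            simp [List.getD_eq_getElem?_getD, List.getElem?_drop, Nat.add_comm]
          · rw [EC (f p) h1 h2]
        intro x y
        beta_reduce
        rw [HT (x, y), HB (x, y + 1)]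
        exact hf6 x y
    · -- B tiles → B' tiles
      rintro ⟨f, hf1, hf2, hf3, hf4, hf5, hf6⟩
      refine ⟨fun p => fwdMap b c (f p), ?_, ?_, ?_, ?_, ?_, ?_⟩
      · intro p
        beta_reduce
        by_cases h : (f p).1 = b
        · by_cases h0 : (f p).2 = 0
          · rw [FA _ h h0]; exact Finset.mem_insert_self _ _
          · rw [FS _ h h0]; exact Finset.mem_insert_of_mem (Finset.mem_insert_self _ _)
        · rw [FN _ h]
          exact Finset.mem_insert_of_mem (Finset.mem_insert_of_mem
            (Finset.mem_erase.2 ⟨h, hf1 p⟩))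
      · intro p
        beta_reduce
        by_cases h : (f p).1 = b
        · by_cases h0 : (f p).2 = 0
          · rw [FA _ h h0]; show (0:ℕ) < n1.len; omega
          · rw [FS _ h h0]
            show (f p).2 - 1 < n2.len
            have := hf2 p; rw [h] at this; omega
        · rw [FN _ h]; exact hf2 p
      · intro x y hlt
        beta_reduce at hlt ⊢
        by_cases h : (f (x, y)).1 = b
        · by_cases h0 : (f (x, y)).2 = 0
          · rw [FA _ h h0] at hlt
            have : (0:ℕ) + 1 < n1.len := hlt
            omega
          · rw [FS _ h h0] at hlt ⊢
            have hlt' : (f (x, y)).2 - 1 + 1 < n2.len := hlt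
            have hstep := hf3 x y (by rw [h]; omega)
            rw [hstep, FS ((f (x, y)).1, (f (x, y)).2 + 1) h (Nat.succ_ne_zero _)]
            refine Prod.ext_iff.2 ⟨rfl, ?_⟩
            show (f (x, y)).2 + 1 - 1 = (f (x, y)).2 - 1 + 1
            omega
        · rw [FN _ h] at hlt ⊢
          have hstep := hf3 x y hlt
          rw [hstep, FN ((f (x, y)).1, (f (x, y)).2 + 1) h]
      · intro x y hpos
        beta_reduce at hpos ⊢
        by_cases h : (f (x, y)).1 = b
        · by_cases h0 : (f (x, y)).2 = 0
          · rw [FA _ h h0] at hpos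
            exact absurd hpos (lt_irrefl 0)
          · rw [FS _ h h0] at hpos ⊢
            have hpos' : 0 < (f (x, y)).2 - 1 := hpos
            have hstep := hf4 x y (Nat.pos_of_ne_zero h0)
            rw [hstep, FS ((f (x, y)).1, (f (x, y)).2 - 1) h (by omega)]
        · rw [FN _ h] at hpos ⊢
          have hstep := hf4 x y hpos
          rw [hstep, FN ((f (x, y)).1, (f (x, y)).2 - 1) h]
      · intro x y hend
        beta_reduce at hend ⊢
        by_cases h : (f (x, y)).1 = b
        · by_cases h0 : (f (x, y)).2 = 0
          · rw [FA _ h h0]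
            have hstep := hf3 x y (by rw [h0, h]; omega)
            rw [hstep, FS ((f (x, y)).1, (f (x, y)).2 + 1) h (Nat.succ_ne_zero _)]
            constructor
            · show (f (x, y)).2 + 1 - 1 = 0; omega
            · rfl
          · rw [FS _ h h0] at hend ⊢
            have hend' : (f (x, y)).2 - 1 + 1 = n2.len := hend
            obtain ⟨hz5, hcol⟩ := hf5 x y (by rw [h]; omega)
            rw [h] at hcol
            by_cases h' : (f (x + 1, y)).1 = b
            · rw [FA _ h' hz5]
              refine ⟨rfl, ?_⟩
              rw [h'] at hcol
              exact hcol
            · rw [FN _ h']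
              exact ⟨hz5, hcol⟩
        · rw [FN _ h] at hend ⊢
          obtain ⟨hz5, hcol⟩ := hf5 x y hend
          by_cases h' : (f (x + 1, y)).1 = b
          · rw [FA _ h' hz5]
            refine ⟨rfl, ?_⟩
            rw [h'] at hcol
            exact hcol
          · rw [FN _ h']
            exact ⟨hz5, hcol⟩
      · have HT : ∀ p, (fwdMap b c (f p)).1.top.getD (fwdMap b c (f p)).2 0 =
            (f p).1.top.getD (f p).2 0 := by
          intro p
          by_cases h : (f p).1 = b
          · by_cases h0 : (f p).2 = 0
            · rw [FA _ h h0, h, h0]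
              show (b.top.take 1).getD 0 0 = b.top.getD 0 0
              simp [List.getD_eq_getElem?_getD, List.getElem?_take]
            · rw [FS _ h h0, h]
              show (b.top.drop 1).getD ((f p).2 - 1) 0 = b.top.getD (f p).2 0
              have hi : 1 + ((f p).2 - 1) = (f p).2 := by omega
              simp only [List.getD_eq_getElem?_getD, List.getElem?_drop]
              rw [hi]
          · rw [FN _ h]
        have HB : ∀ p, (fwdMap b c (f p)).1.bottom.getD (fwdMap b c (f p)).2 0 =
            (f p).1.bottom.getD (f p).2 0 := by
          intro p
          by_cases h : (f p).1 = b
          · by_cases h0 : (f p).2 = 0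
            · rw [FA _ h h0, h, h0]
              show (b.bottom.take 1).getD 0 0 = b.bottom.getD 0 0
              simp [List.getD_eq_getElem?_getD, List.getElem?_take]
            · rw [FS _ h h0, h]
              show (b.bottom.drop 1).getD ((f p).2 - 1) 0 = b.bottom.getD (f p).2 0
              have hi : 1 + ((f p).2 - 1) = (f p).2 := by omega
              simp only [List.getD_eq_getElem?_getD, List.getElem?_drop]
              rw [hi]
          · rw [FN _ h]
        intro x y
        beta_reduce
        rw [HT (x, y), HB (x, y + 1)]
        exact hf6 x y
  · -- cardinality
    rw [Finset.card_insert_of_notMem, Finset.card_insert_of_notMem,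
        Finset.card_erase_of_mem hb]
    · have : 1 ≤ B.card := Finset.card_pos.2 ⟨b, hb⟩
      omega
    · exact fun h => hn2B (Finset.mem_of_mem_erase h)
    · simp only [Finset.mem_insert]
      rintro (h | h)
      · exact h12 h
      · exact hn1B (Finset.mem_of_mem_erase h)
  · -- colors
    have herase : barColors b ∪ (B.erase b).biUnion barColors = B.biUnion barColors := by
      rw [← Finset.biUnion_insert, Finset.insert_erase hb]
    have hnew : barColors n1 ∪ barColors n2 = insert c (barColors b) := by
      ext x
      have ht : x ∈ b.top.take 1 ∨ x ∈ b.top.drop 1 ↔ x ∈ b.top := by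
        rw [← List.mem_append, List.take_append_drop]
      have hbo : x ∈ b.bottom.take 1 ∨ x ∈ b.bottom.drop 1 ↔ x ∈ b.bottom := by
        rw [← List.mem_append, List.take_append_drop]
      simp only [barColors, hn1, hn2, Finset.mem_union, Finset.mem_insert, Finset.mem_singleton,
        List.mem_toFinset, WangBar.top, WangBar.bottom, WangBar.left, WangBar.right]
      tauto
    have hsc : setColors (insert n1 (insert n2 (B.erase b))) = insert c (setColors B) := by
      simp only [setColors]
      rw [Finset.biUnion_insert, Finset.biUnion_insert, ← Finset.union_assoc, hnew,
        Finset.insert_union, herase]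
    rw [hsc, Finset.card_insert_of_notMem hc]

lemma vert_subset_set (B : Finset WangBar) : vertColors B ⊆ setColors B := by
  intro x hx
  obtain ⟨u, hu, hxu⟩ := Finset.mem_biUnion.1 hx
  refine Finset.mem_biUnion.2 ⟨u, hu, ?_⟩
  simp only [Finset.mem_insert, Finset.mem_singleton] at hxu
  rcases hxu with h | h <;> simp [barColors, h]


/-- Cutting a set `B` of `k` Wang bars by `t` cutting operations into a set `Tb` of
Wang tiles (bars of length 1) preserves tileability, and `n(Tb) = k + t`,
`c(Tb) ≥ v + t` and `cd(Tb) = n(Tb) - c(Tb) ≤ k - v`, where `v` is the number of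
distinct colors on the vertical sides of `B`. -/
theorem cut_to_tiles (B Tb : Finset WangBar) (k t : ℕ) (chain : ℕ → Finset WangBar)
    (hvalid : ∀ u ∈ B, u.IsValid) (hk : B.card = k)
    (h0 : chain 0 = B) (ht : chain t = Tb)
    (hstep : ∀ i < t, CutStep (chain i) (chain (i + 1)))
    (htiles : ∀ b ∈ Tb, b.len = 1) :
    (BarsTilePlane Tb ↔ BarsTilePlane B) ∧
    Tb.card = k + t ∧
    (vertColors B).card + t ≤ (setColors Tb).card ∧
    Tb.card - (setColors Tb).card ≤ k - (vertColors B).card := by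
  have key : ∀ i, i ≤ t → (BarsTilePlane (chain i) ↔ BarsTilePlane B) ∧
      (chain i).card = k + i ∧ (setColors (chain i)).card = (setColors B).card + i := by
    intro i
    induction i with
    | zero => intro _; simp [h0, hk]
    | succ n ih =>
      intro hn
      obtain ⟨hT, hC, hS⟩ := ih (by omega)
      obtain ⟨hT', hC', hS'⟩ := cutstep_props (hstep n (by omega))
      exact ⟨hT'.trans hT, by omega, by omega⟩
  obtain ⟨hT, hC, hS⟩ := key t le_rfl
  rw [ht] at hT hC hS
  have hv : (vertColors B).card ≤ (setColors B).card :=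
    Finset.card_le_card (vert_subset_set B)
  exact ⟨hT, hC, by omega, by omega⟩
end

section
/- (Padding) For every finite set T of Wang tiles and every integer d with d ≥ cd(T), there exists a finite set T' of Wang tiles containing T with cd(T') = d such that T' tiles the plane if and only if T tiles the plane; the added tiles do not contribute to any tiling of the plane but increase the color deficiency. -/
/-- **Padding.**  For every finite set `T` of Wang tiles and every `d ≥ cd(T)` there
is a finite set `T' ⊇ T` of Wang tiles with `cd(T') = d` tiling the plane if and
only if `T` does; the added tiles do not contribute to any tiling of the plane
(every tiling of the plane by `T'` uses only tiles of `T`). -/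
theorem padding_color_deficiency (T : Finset WangTile) (d : ℕ)
    (hd : colorDeficiency T ≤ d) :
    ∃ T' : Finset WangTile, T ⊆ T' ∧ colorDeficiency T' = d ∧
      (TilesPlane T' ↔ TilesPlane T) ∧
      ∀ f : ℤ × ℤ → WangTile, IsWangTiling T' f → ∀ p, f p ∈ T := by
  classical
  obtain ⟨e, he⟩ : ∃ e, T.card + e = (tileSetColors T).card + d := by
    refine ⟨(tileSetColors T).card + d - T.card, ?_⟩
    unfold colorDeficiency at hd
    omega
  set a := (tileSetColors T).sup id + 1 with ha
  have hfresh : ∀ x ∈ tileSetColors T, x < a := fun x hx =>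
    Nat.lt_succ_of_le (Finset.le_sup (f := id) hx)
  set m := e + 2 with hm
  set K := 2 * e + 3 with hK
  have hmpos : 0 < m := by omega
  have hKm : K ≤ m * m := by
    have h : m * m = e * e + 4 * e + 4 := by rw [hm]; ring
    have h2 : 0 ≤ e * e := Nat.zero_le _
    omega
  set g : ℕ → WangTile := fun s => (a, a + 1 + s % m, a + 1 + s / m, a) with hg
  set S := (Finset.range K).image g with hS
  have hTcol : ∀ t ∈ T, ∀ x ∈ t.colors, x < a := by
    intro t ht x hx
    exact hfresh x (Finset.mem_biUnion.mpr ⟨t, ht, hx⟩)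
  have hcolmem : ∀ t : WangTile, t.north ∈ t.colors ∧ t.east ∈ t.colors ∧
      t.south ∈ t.colors ∧ t.west ∈ t.colors := by
    intro t
    simp [WangTile.colors]
  have hSnorth : ∀ t ∈ S, t.north = a := by
    intro t ht
    obtain ⟨s, _, rfl⟩ := Finset.mem_image.mp ht
    rfl
  have hSsouth : ∀ t ∈ S, a < t.south := by
    intro t ht
    obtain ⟨s, _, rfl⟩ := Finset.mem_image.mp ht
    show a < a + 1 + s / m
    exact Nat.lt_of_lt_of_le (Nat.lt_succ_self a) (Nat.le_add_right (a + 1) _)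
  have hnsouth : ∀ t ∈ T ∪ S, t.south ≠ a := by
    intro t ht
    rcases Finset.mem_union.mp ht with h | h
    · exact Nat.ne_of_lt (hTcol t h _ (hcolmem t).2.2.1)
    · exact Nat.ne_of_gt (hSsouth t h)
  have hdead : ∀ f : ℤ × ℤ → WangTile, IsWangTiling (T ∪ S) f → ∀ p, f p ∈ T := by
    rintro f ⟨hmem, _, hns⟩ ⟨x, y⟩
    rcases Finset.mem_union.mp (hmem (x, y)) with h | h
    · exact h
    · exfalso
      apply hnsouth _ (hmem (x, y + 1))
      rw [← hns x y, hSnorth _ h]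
  have hginj : Function.Injective g := by
    intro s t hst
    simp only [hg, Prod.mk.injEq] at hst
    obtain ⟨-, h1, h2, -⟩ := hst
    have h1' : s % m = t % m := by omega
    have h2' : s / m = t / m := by omega
    have hs := Nat.div_add_mod s m
    have ht := Nat.div_add_mod t m
    rw [h1', h2'] at hs
    omega
  have hScard : S.card = K := by
    rw [hS, Finset.card_image_of_injective _ hginj, Finset.card_range]
  have hdisj : Disjoint T S := by
    rw [Finset.disjoint_left]
    intro t ht hts
    have h1 := hTcol t ht _ (hcolmem t).1
    have h2 := hSnorth t hts
    omega
  set N : Finset ℕ := insert a ((Finset.range m).image (fun i => a + 1 + i)) with hN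
  have hScolors : tileSetColors S = N := by
    apply Finset.ext
    intro x
    constructor
    · intro hx
      obtain ⟨t, ht, hxt⟩ := Finset.mem_biUnion.mp hx
      obtain ⟨s, hs, rfl⟩ := Finset.mem_image.mp ht
      have hs' := Finset.mem_range.mp hs
      have hmod : s % m < m := Nat.mod_lt _ hmpos
      have hdiv : s / m < m := by
        rw [Nat.div_lt_iff_lt_mul hmpos]
        exact lt_of_lt_of_le hs' hKm
      simp only [hg, WangTile.colors, WangTile.north, WangTile.east, WangTile.south,
        WangTile.west, Finset.mem_insert, Finset.mem_singleton] at hxt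
      rcases hxt with rfl | rfl | rfl | rfl
      · exact Finset.mem_insert_self _ _
      · exact Finset.mem_insert_of_mem (Finset.mem_image.mpr
          ⟨s % m, Finset.mem_range.mpr hmod, rfl⟩)
      · exact Finset.mem_insert_of_mem (Finset.mem_image.mpr
          ⟨s / m, Finset.mem_range.mpr hdiv, rfl⟩)
      · exact Finset.mem_insert_self _ _
    · intro hx
      rcases Finset.mem_insert.mp hx with rfl | hx
      · refine Finset.mem_biUnion.mpr ⟨g 0, Finset.mem_image.mpr
          ⟨0, Finset.mem_range.mpr (by omega), rfl⟩, ?_⟩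
        exact (hcolmem (g 0)).1
      · obtain ⟨i, hi, rfl⟩ := Finset.mem_image.mp hx
        have hi' := Finset.mem_range.mp hi
        refine Finset.mem_biUnion.mpr ⟨g i, Finset.mem_image.mpr
          ⟨i, Finset.mem_range.mpr (by omega), rfl⟩, ?_⟩
        have h := (hcolmem (g i)).2.1
        have hieq : (g i).east = a + 1 + i := by
          show a + 1 + i % m = a + 1 + i
          rw [Nat.mod_eq_of_lt hi']
        rwa [hieq] at h
  have haddinj : Function.Injective (fun i : ℕ => a + 1 + i) := by
    intro i j h
    simpa using h
  have hNcard : N.card = m + 1 := by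
    rw [hN, Finset.card_insert_of_notMem, Finset.card_image_of_injective _ haddinj,
      Finset.card_range]
    intro h
    obtain ⟨i, -, hi⟩ := Finset.mem_image.mp h
    omega
  have hCNdisj : Disjoint (tileSetColors T) N := by
    rw [Finset.disjoint_left]
    intro x hx hxN
    have h1 := hfresh x hx
    rcases Finset.mem_insert.mp hxN with rfl | h
    · omega
    · obtain ⟨i, -, hi⟩ := Finset.mem_image.mp h
      omega
  have hcolsUnion : tileSetColors (T ∪ S) = tileSetColors T ∪ N := by
    rw [← hScolors]
    apply Finset.ext
    intro x
    simp only [tileSetColors, Finset.mem_biUnion, Finset.mem_union]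
    constructor
    · rintro ⟨t, ht | ht, hxt⟩
      · exact Or.inl ⟨t, ht, hxt⟩
      · exact Or.inr ⟨t, ht, hxt⟩
    · rintro (⟨t, ht, hxt⟩ | ⟨t, ht, hxt⟩)
      · exact ⟨t, Or.inl ht, hxt⟩
      · exact ⟨t, Or.inr ht, hxt⟩
  refine ⟨T ∪ S, Finset.subset_union_left, ?_, ?_, hdead⟩
  · unfold colorDeficiency
    rw [hcolsUnion, Finset.card_union_of_disjoint hdisj,
      Finset.card_union_of_disjoint hCNdisj, hScard, hNcard]
    omega
  · constructor
    · rintro ⟨f, hf⟩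
      exact ⟨f, hdead f hf, hf.2.1, hf.2.2⟩
    · rintro ⟨f, hf⟩
      exact ⟨f, fun p => Finset.mem_union_left _ (hf.1 p), hf.2.1, hf.2.2⟩
end
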